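/- Let σ ≥ 1 and let c_σ > 0 be a constant such that M[w] + H[w] ≥ f_σ(‖w‖_{H¹}) for all w ∈ H¹, where f_σ(x) = x² − c_σ x^{2σ+2}; let x⋆ > 0 be the point where f_σ attains its positive local maximum. Let T > 0 and let u : [0,T] → H¹ be such that t ↦ ‖u(t)‖_{H¹} is continuous and M[u(t)] + H[u(t)] = M[u(0)] + H[u(0)] for all t ∈ [0,T]. If M[u(0)] + H[u(0)] < f_σ(x⋆), then: (i) if ‖u(0)‖_{H¹} < x⋆, then ‖u(t)‖_{H¹} < x⋆ for all t ∈ [0,T]; (ii) if ‖u(0)‖_{H¹} > x⋆, then ‖u(t)‖_{H¹} > x⋆ for all t ∈ [0,T]. -/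

import Mathlib

open MeasureTheory Filter

noncomputable section

/-- `k`-th Fourier coefficient of a `2π`-periodic function `f : ℝ → ℂ`. -/
def fc (f : ℝ → ℂ) (k : ℤ) : ℂ :=
  (1 / (2 * Real.pi)) *
    ∫ x in (0:ℝ)..(2 * Real.pi), f x * Complex.exp (-(Complex.I) * (k : ℂ) * (x : ℂ))

/-- Square of the `Hˢ` norm, `‖f‖_{Hˢ}² = Σₖ (1+|k|^{2s}) |f̂(k)|²`. -/
def HsNormSq (s : ℝ) (f : ℝ → ℂ) : ℝ :=
  ∑' k : ℤ, (1 + |(k : ℝ)| ^ (2 * s)) * ‖fc f k‖ ^ 2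

/-- The `Hˢ` norm. -/
def HsNorm (s : ℝ) (f : ℝ → ℂ) : ℝ := Real.sqrt (HsNormSq s f)

/-- Membership in `Hˢ(𝕋)`: `2π`-periodic, locally integrable, with finite `Hˢ` norm. -/
def MemHs (s : ℝ) (f : ℝ → ℂ) : Prop :=
  Function.Periodic f (2 * Real.pi) ∧
  IntervalIntegrable f MeasureTheory.volume 0 (2 * Real.pi) ∧
  Summable (fun k : ℤ => (1 + |(k : ℝ)| ^ (2 * s)) * ‖fc f k‖ ^ 2)

/-- The `Hˢ` inner product `⟨f,g⟩_{Hˢ} = Σₖ (1+|k|^{2s}) f̂(k) conj (ĝ(k))`. -/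
def HsInner (s : ℝ) (f g : ℝ → ℂ) : ℂ :=
  ∑' k : ℤ, (Complex.ofReal (1 + |(k : ℝ)| ^ (2 * s))) * fc f k * (starRingEnd ℂ) (fc g k)

/-- Frequency cutoff `⌈1/ε⌉` of the mollifier. -/
def Nmoll (ε : ℝ) : ℤ := ⌈1 / ε⌉

/-- The mollifier `J_ε`: Fourier projection onto modes `|k| ≤ ⌈1/ε⌉`. -/
def Jmol (ε : ℝ) (f : ℝ → ℂ) : ℝ → ℂ :=
  fun x => ∑ k ∈ Finset.Icc (-(Nmoll ε)) (Nmoll ε),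
    fc f k * Complex.exp (Complex.I * (k : ℂ) * (x : ℂ))

/-- The Schrödinger semigroup `e^{it∂ₓ²}`, acting by `f̂(k) ↦ e^{-ik²t} f̂(k)`. -/
def Sg (t : ℝ) (f : ℝ → ℂ) : ℝ → ℂ :=
  fun x => ∑' k : ℤ,
    Complex.exp (-(Complex.I) * (k : ℂ) ^ 2 * (t : ℂ)) * fc f k *
      Complex.exp (Complex.I * (k : ℂ) * (x : ℂ))

/-- The truncated semigroup `e^{i J_ε ∂ₓ² t}`: multiplier `e^{-ik²t}` for `|k| ≤ ⌈1/ε⌉`, `1` otherwise. -/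
def Bmol (ε t : ℝ) (f : ℝ → ℂ) : ℝ → ℂ :=
  fun x => f x - Jmol ε f x
    + ∑ k ∈ Finset.Icc (-(Nmoll ε)) (Nmoll ε),
        Complex.exp (-(Complex.I) * (k : ℂ) ^ 2 * (t : ℂ)) * fc f k *
          Complex.exp (Complex.I * (k : ℂ) * (x : ℂ))

/-- The gDNLS nonlinearity `|f|^{2σ} f_x`. -/
def NL (σ : ℝ) (f : ℝ → ℂ) : ℝ → ℂ :=
  fun x => (Complex.ofReal (‖f x‖ ^ (2 * σ))) * deriv f x

/-- `u` is a mild solution of gDNLS on `[0,T]` with initial data `u₀`. -/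
def IsMildSolution (σ T : ℝ) (u₀ : ℝ → ℂ) (u : ℝ → ℝ → ℂ) : Prop :=
  ∀ t ∈ Set.Icc (0 : ℝ) T, ∀ x : ℝ,
    u t x = Sg t u₀ x - ∫ s in (0:ℝ)..t, Sg (t - s) (NL σ (u s)) x

/-- `u ∈ L^∞(0,T;Hˢ)`. -/
def BddHs (s T : ℝ) (u : ℝ → ℝ → ℂ) : Prop :=
  (∀ t ∈ Set.Icc (0 : ℝ) T, MemHs s (u t)) ∧
  ∃ M : ℝ, ∀ t ∈ Set.Icc (0 : ℝ) T, HsNorm s (u t) ≤ M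

/-- Continuity in time with values in `Hˢ`, on a time set `I`. -/
def ContHsOn (s : ℝ) (I : Set ℝ) (u : ℝ → ℝ → ℂ) : Prop :=
  (∀ t ∈ I, MemHs s (u t)) ∧
  ∀ t ∈ I, Filter.Tendsto (fun t' => HsNorm s (fun x => u t' x - u t x))
    (nhdsWithin t I) (nhds 0)

/-- `u ∈ C([0,T];Hˢ)`. -/
def ContHs (s T : ℝ) (u : ℝ → ℝ → ℂ) : Prop := ContHsOn s (Set.Icc 0 T) u

/-- The mollified nonlinearity `|J_ε f|^{2σ} J_ε f_x`. -/
def MolNL (σ ε : ℝ) (f : ℝ → ℂ) : ℝ → ℂ :=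
  fun x => (Complex.ofReal (‖Jmol ε f x‖ ^ (2 * σ))) * deriv (Jmol ε f) x

/-- `F_ε(f) = -|J_ε f|^{2σ} J_ε f_x + i ∂ₓ²(J_ε f)`. -/
def Fmol (σ ε : ℝ) (f : ℝ → ℂ) : ℝ → ℂ :=
  fun x => -(MolNL σ ε f x) + Complex.I * deriv (deriv (Jmol ε f)) x

/-- The right-hand side `J_ε F_ε(f)` of the mollified gDNLS equation. -/
def MolRHS (σ ε : ℝ) (f : ℝ → ℂ) : ℝ → ℂ := Jmol ε (Fmol σ ε f)

/-- `u` solves the mollified gDNLS equation `∂ₜ u = J_ε F_ε(u)` on the time set `I`. -/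
def SolvesMollified (σ ε : ℝ) (I : Set ℝ) (u : ℝ → ℝ → ℂ) : Prop :=
  ∀ t ∈ I, ∀ x : ℝ, HasDerivAt (fun τ => u τ x) (MolRHS σ ε (u t) x) t

/-- Square of the `L²(𝕋)` norm. -/
def L2NormSq (f : ℝ → ℂ) : ℝ := ∫ x in (0:ℝ)..(2 * Real.pi), ‖f x‖ ^ 2

/-- The `L²(𝕋)` norm. -/
def L2Norm (f : ℝ → ℂ) : ℝ := Real.sqrt (L2NormSq f)

/-- Square of the `L²(0,T;Hˢ)` norm. -/
def L2HsNormSq (T s : ℝ) (u : ℝ → ℝ → ℂ) : ℝ := ∫ t in (0:ℝ)..T, HsNormSq s (u t)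

/-- The `L²(0,T;Hˢ)` norm. -/
def L2HsNorm (T s : ℝ) (u : ℝ → ℝ → ℂ) : ℝ := Real.sqrt (L2HsNormSq T s u)

/-- Membership in `L²(0,T;Hˢ)`. -/
def MemL2Hs (T s : ℝ) (u : ℝ → ℝ → ℂ) : Prop :=
  (∀ t ∈ Set.Ioc (0:ℝ) T, MemHs s (u t)) ∧
  IntervalIntegrable (fun t => HsNormSq s (u t)) MeasureTheory.volume 0 T

/-- The gDNLS Hamiltonian `H[f] = ∫ |f_x|² + (σ+1)⁻² conj f^{σ+1} D_x (f^{σ+1})`, `D_x = -i∂ₓ`. -/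
def Ham (σ : ℝ) (f : ℝ → ℂ) : ℂ :=
  ∫ x in (0:ℝ)..(2 * Real.pi),
    Complex.ofReal (‖deriv f x‖ ^ 2)
      + Complex.ofReal (((σ + 1) ^ 2)⁻¹) * ((starRingEnd ℂ) (f x)) ^ ((σ : ℂ) + 1)
        * (-(Complex.I) * deriv (fun y => (f y) ^ ((σ : ℂ) + 1)) x)

/-- The mollified Hamiltonian `H_ε[f]`. -/
def Hmol (σ ε : ℝ) (f : ℝ → ℂ) : ℂ :=
  ∫ x in (0:ℝ)..(2 * Real.pi),
    Complex.ofReal (‖deriv f x‖ ^ 2)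
      + Complex.ofReal (((σ + 1) ^ 2)⁻¹) * ((starRingEnd ℂ) (Jmol ε f x)) ^ ((σ : ℂ) + 1)
        * (-(Complex.I) * deriv (fun y => (Jmol ε f y) ^ ((σ : ℂ) + 1)) x)

/-- The mass `M[f] = ∫ |f|²`. -/
def Mass (f : ℝ → ℂ) : ℝ := ∫ x in (0:ℝ)..(2 * Real.pi), ‖f x‖ ^ 2

/-- The momentum `P[f] = -(1/2) ∫ conj f · D_x f`, `D_x = -i∂ₓ`. -/
def Mom (f : ℝ → ℂ) : ℂ :=
  -(1/2 : ℂ) * ∫ x in (0:ℝ)..(2 * Real.pi), (starRingEnd ℂ) (f x) * (-(Complex.I) * deriv f x)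

/-!
Conservation and the lower bound give `f(‖u(t)‖) ≤ E < f(x⋆)`, so `‖u(t)‖_{H¹}` never takes
the value `x⋆`; being continuous on the connected interval `[0,T]`, it cannot cross `x⋆`.
-/

open Set

theorem IsPreconnected.apply_lt_of_forall_ne {X α : Type*} [TopologicalSpace X]
    [LinearOrder α] [TopologicalSpace α] [OrderClosedTopology α] {S : Set X}
    (hS : IsPreconnected S) {g : X → α} (hg : ContinuousOn g S) {a : α}
    (hne : ∀ x ∈ S, g x ≠ a) {x₀ x : X} (hx₀ : x₀ ∈ S) (hx : x ∈ S) (h₀ : g x₀ < a) :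
    g x < a := by
  by_contra! hle
  obtain ⟨y, hy, hgy⟩ := hS.intermediate_value hx₀ hx hg ⟨h₀.le, hle⟩
  exact hne y hy hgy

theorem IsPreconnected.lt_apply_of_forall_ne {X α : Type*} [TopologicalSpace X]
    [LinearOrder α] [TopologicalSpace α] [OrderClosedTopology α] {S : Set X}
    (hS : IsPreconnected S) {g : X → α} (hg : ContinuousOn g S) {a : α}
    (hne : ∀ x ∈ S, g x ≠ a) {x₀ x : X} (hx₀ : x₀ ∈ S) (hx : x ∈ S) (h₀ : a < g x₀) :
    a < g x := by
  by_contra! hle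
  exact (hS.apply_lt_of_forall_ne hg hne hx hx₀ (lt_of_le_of_ne hle (hne x hx))).not_gt h₀

theorem HsNorm_ne_of_energy_lt {σ c xs : ℝ} {w : ℝ → ℂ}
    (hbound : HsNorm 1 w ^ 2 - c * HsNorm 1 w ^ (2*σ + 2) ≤ Mass w + (Ham σ w).re)
    (hsmall : Mass w + (Ham σ w).re < xs ^ 2 - c * xs ^ (2*σ + 2)) :
    HsNorm 1 w ≠ xs := by
  rintro rfl
  exact hbound.not_gt hsmall

theorem statement19_general (σ c T : ℝ)
    (hbound : ∀ w : ℝ → ℂ, MemHs 1 w →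
      HsNorm 1 w ^ 2 - c * HsNorm 1 w ^ (2*σ + 2) ≤ Mass w + (Ham σ w).re)
    (xs : ℝ)
    (u : ℝ → ℝ → ℂ) (hmem : ∀ t ∈ Set.Icc (0:ℝ) T, MemHs 1 (u t))
    (hnormcont : ContinuousOn (fun t => HsNorm 1 (u t)) (Set.Icc 0 T))
    (hcons : ∀ t ∈ Set.Icc (0:ℝ) T,
      Mass (u t) + (Ham σ (u t)).re = Mass (u 0) + (Ham σ (u 0)).re)
    (hsmall : Mass (u 0) + (Ham σ (u 0)).re < xs ^ 2 - c * xs ^ (2*σ + 2)) :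
    (HsNorm 1 (u 0) < xs → ∀ t ∈ Set.Icc (0:ℝ) T, HsNorm 1 (u t) < xs) ∧
    (xs < HsNorm 1 (u 0) → ∀ t ∈ Set.Icc (0:ℝ) T, xs < HsNorm 1 (u t)) := by
  have hne : ∀ t ∈ Icc (0:ℝ) T, HsNorm 1 (u t) ≠ xs := fun t ht =>
    HsNorm_ne_of_energy_lt (hbound (u t) (hmem t ht)) (hcons t ht ▸ hsmall)
  have h0 : ∀ t ∈ Icc (0:ℝ) T, (0:ℝ) ∈ Icc (0:ℝ) T := fun _ ht => ⟨le_rfl, ht.1.trans ht.2⟩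
  exact ⟨fun hlt t ht => isPreconnected_Icc.apply_lt_of_forall_ne hnormcont hne (h0 t ht) ht hlt,
    fun hgt t ht => isPreconnected_Icc.lt_apply_of_forall_ne hnormcont hne (h0 t ht) ht hgt⟩

/-- Let `σ ≥ 1` and `c_σ > 0` be such that `M[w] + H[w] ≥ f_σ(‖w‖_{H¹})`
for all `w ∈ H¹`, where `f_σ(x) = x² − c_σ x^{2σ+2}`, and let `x⋆ > 0` be the point where
`f_σ` attains its positive local maximum. If `t ↦ ‖u(t)‖_{H¹}` is continuous on `[0,T]`,
`M + H` is conserved, and `M[u(0)] + H[u(0)] < f_σ(x⋆)`, then the `H¹` norm stays on the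
same side of `x⋆` as at `t = 0`. -/
theorem statement19 (σ c T : ℝ) (hσ : 1 ≤ σ) (hc : 0 < c) (hT : 0 < T)
    (hbound : ∀ w : ℝ → ℂ, MemHs 1 w →
      HsNorm 1 w ^ 2 - c * HsNorm 1 w ^ (2*σ + 2) ≤ Mass w + (Ham σ w).re)
    (xs : ℝ) (hxs : 0 < xs)
    (hmax : IsLocalMax (fun x : ℝ => x ^ 2 - c * x ^ (2*σ + 2)) xs)
    (u : ℝ → ℝ → ℂ) (hmem : ∀ t ∈ Set.Icc (0:ℝ) T, MemHs 1 (u t))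
    (hnormcont : ContinuousOn (fun t => HsNorm 1 (u t)) (Set.Icc 0 T))
    (hcons : ∀ t ∈ Set.Icc (0:ℝ) T,
      Mass (u t) + (Ham σ (u t)).re = Mass (u 0) + (Ham σ (u 0)).re)
    (hsmall : Mass (u 0) + (Ham σ (u 0)).re < xs ^ 2 - c * xs ^ (2*σ + 2)) :
    (HsNorm 1 (u 0) < xs → ∀ t ∈ Set.Icc (0:ℝ) T, HsNorm 1 (u t) < xs) ∧
    (xs < HsNorm 1 (u 0) → ∀ t ∈ Set.Icc (0:ℝ) T, xs < HsNorm 1 (u t)) :=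
  statement19_general σ c T hbound xs u hmem hnormcont hcons hsmall
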